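/- arXiv:1604.04342 — 3 statements merged into one kernel-verified Lean document; each statement's English description precedes it below -/
import Mathlib

section
/- Let F, μ ≥ 0 be measurable functions (pointwise values F, μ > 0) and 0 < δ̄ ≤ 1 be a constant. At any point where |F − μ| ≥ δ̄·μ, one has |F − μ| ≤ (4/δ̄)·( F ln F − μ ln μ − (1 + ln μ)(F − μ) ). -/
/-!
The left-hand side is the Bregman divergence of `t ↦ t log t`, which equals `μ · klFun (F / μ)`.
Since `klFun'' x = 1 / x`, comparing derivatives gives `klFun x ≥ (x - 1)² / (2 max x 1)`, i.e. the
divergence is at least `|F - μ|² / (2 max F μ)`. When `|F - μ| ≥ δ μ` with `δ ≤ 1`, one has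
`δ · max F μ ≤ 2 |F - μ|`, so this quadratic bound is at least `δ |F - μ| / 4`.
-/

open Real Set InformationTheory

lemma sq_sub_one_div_two_le_klFun {x : ℝ} (hx0 : 0 < x) (hx1 : x ≤ 1) :
    (x - 1) ^ 2 / 2 ≤ klFun x := by
  have hanti : AntitoneOn (fun y ↦ klFun y - (y - 1) ^ 2 / 2) (Ioi 0) := by
    refine antitoneOn_of_hasDerivWithinAt_nonpos (convex_Ioi 0)
      (f' := fun y ↦ log y - (y - 1)) (continuous_klFun.sub (by fun_prop)).continuousOn
      (fun y hy ↦ ?_) (fun y hy ↦ ?_)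
    · rw [interior_Ioi] at hy ⊢
      have hsq : HasDerivAt (fun y : ℝ ↦ (y - 1) ^ 2 / 2) (y - 1) y := by
        simpa using (((hasDerivAt_id y).sub_const 1).pow 2).div_const 2
      exact ((hasDerivAt_klFun (ne_of_gt hy)).sub hsq).hasDerivWithinAt
    · rw [interior_Ioi] at hy
      linarith [log_le_sub_one_of_pos hy]
  simpa [klFun_one] using hanti hx0 (mem_Ioi.2 one_pos) hx1

lemma sq_sub_one_div_two_mul_le_klFun {x : ℝ} (hx : 1 ≤ x) :
    (x - 1) ^ 2 / (2 * x) ≤ klFun x := by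
  have hmono : MonotoneOn (fun y ↦ klFun y - (y / 2 - 1 + y⁻¹ / 2)) (Ici 1) := by
    refine monotoneOn_of_hasDerivWithinAt_nonneg (convex_Ici 1)
      (f' := fun y ↦ log y - (1 / 2 - (y ^ 2)⁻¹ / 2)) ?_ (fun y hy ↦ ?_) (fun y hy ↦ ?_)
    · exact continuous_klFun.continuousOn.sub <| by
        fun_prop (disch := intro y hy; exact (zero_lt_one.trans_le hy).ne')
    · rw [interior_Ici] at hy ⊢
      have hy0 : y ≠ 0 := (zero_lt_one.trans hy).ne'
      have hrat : HasDerivAt (fun y : ℝ ↦ y / 2 - 1 + y⁻¹ / 2) (1 / 2 - (y ^ 2)⁻¹ / 2) y :=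
        ((((hasDerivAt_id' y).div_const 2).sub_const 1).add
          ((hasDerivAt_inv hy0).div_const 2)).congr_deriv (by ring)
      exact ((hasDerivAt_klFun hy0).sub hrat).hasDerivWithinAt
    · rw [interior_Ici] at hy
      have hy0 : 0 < y := zero_lt_one.trans hy
      -- `log y ≥ 1 - y⁻¹ ≥ (1 - y⁻¹) (1 + y⁻¹) / 2` since `y⁻¹ ≤ 1`
      have hinv : y⁻¹ ≤ 1 := inv_le_one_of_one_le₀ hy.le
      rw [← inv_pow]
      nlinarith [one_sub_inv_le_log_of_pos hy0, inv_pos.2 hy0]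
  have := hmono (mem_Ici.2 le_rfl) (mem_Ici.2 hx) hx
  have hx0 : x ≠ 0 := (zero_lt_one.trans_le hx).ne'
  have heq : (x - 1) ^ 2 / (2 * x) = x / 2 - 1 + x⁻¹ / 2 := by field_simp; ring
  norm_num [klFun_one] at this
  linarith

lemma sq_sub_one_div_two_mul_max_le_klFun {x : ℝ} (hx : 0 < x) :
    (x - 1) ^ 2 / (2 * max x 1) ≤ klFun x := by
  rcases le_total x 1 with hx1 | hx1
  · simpa [max_eq_right hx1] using sq_sub_one_div_two_le_klFun hx hx1
  · simpa [max_eq_left hx1] using sq_sub_one_div_two_mul_le_klFun hx1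

lemma mul_log_sub_mul_log_sub_eq_mul_klFun {s : ℝ} (t : ℝ) (hs : 0 < s) :
    t * log t - s * log s - (1 + log s) * (t - s) = s * klFun (t / s) := by
  rcases eq_or_ne t 0 with rfl | ht
  · simp only [klFun_zero, log_zero, zero_div]; ring
  rw [klFun_apply, log_div ht hs.ne']
  field_simp
  ring

lemma sq_sub_div_two_mul_max_le_mul_log_sub {t s : ℝ} (ht : 0 < t) (hs : 0 < s) :
    (t - s) ^ 2 / (2 * max t s) ≤ t * log t - s * log s - (1 + log s) * (t - s) := by
  have hmax : max t s = s * max (t / s) 1 := by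
    rw [mul_max_of_nonneg _ _ hs.le, mul_div_cancel₀ _ hs.ne', mul_one]
  calc (t - s) ^ 2 / (2 * max t s) = s * ((t / s - 1) ^ 2 / (2 * max (t / s) 1)) := by
        rw [hmax]; field_simp
    _ ≤ s * klFun (t / s) :=
        mul_le_mul_of_nonneg_left (sq_sub_one_div_two_mul_max_le_klFun (div_pos ht hs)) hs.le
    _ = _ := (mul_log_sub_mul_log_sub_eq_mul_klFun t hs).symm

lemma mul_max_le_two_mul_abs_sub {t s δ : ℝ} (hδ : δ ≤ 1) (h : δ * s ≤ |t - s|) :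
    δ * max t s ≤ 2 * |t - s| := by
  rcases le_total t s with hts | hst
  · rw [max_eq_right hts]
    linarith [abs_nonneg (t - s)]
  · rw [max_eq_left hst, abs_of_nonneg (sub_nonneg.2 hst)] at *
    nlinarith [mul_le_mul_of_nonneg_right hδ (sub_nonneg.2 hst)]

theorem entropy_pointwise_bound (F μ δ : ℝ) (hF : 0 < F) (hμ : 0 < μ)
    (hδ0 : 0 < δ) (hδ1 : δ ≤ 1) (h : δ * μ ≤ |F - μ|) :
    |F - μ| ≤ (4 / δ) *
      (F * Real.log F - μ * Real.log μ - (1 + Real.log μ) * (F - μ)) := by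
  have hM : 0 < max F μ := lt_max_of_lt_right hμ
  have hd : 0 < |F - μ| := (mul_pos hδ0 hμ).trans_le h
  have hbregman := sq_sub_div_two_mul_max_le_mul_log_sub hF hμ
  have hmax := mul_max_le_two_mul_abs_sub hδ1 h
  rw [← sq_abs] at hbregman
  rw [div_mul_eq_mul_div, le_div_iff₀ hδ0]
  calc |F - μ| * δ ≤ 4 * (|F - μ| ^ 2 / (2 * max F μ)) := by
        rw [mul_div_assoc', le_div_iff₀ (by positivity)]
        nlinarith [mul_le_mul_of_nonneg_left hmax hd.le]
    _ ≤ _ := by gcongr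
end

section
/- Let Ω ⊂ ℝ³ be a bounded open set, and consider the trajectory X(s) = x + v(s − t) + ∫ₜ^s ∫ₜ^τ (−∇Φ)(σ, X(σ)) dσ dτ of a particle with position x ∈ closure(Ω) at time t, velocity v with |v| ≥ 1/N, and force field −∇Φ satisfying ‖∇Φ‖_∞ < δ/(3·diam(Ω)·N²) with N ≫ 1, 0 < δ ≪ 1. Then the backward exit time t_b(t,x,v) := sup{ s ≥ 0 : X(τ;t,x,v) ∈ Ω for all τ ∈ (t−s, t) } satisfies t_b(t,x,v) ≤ 3N·diam(Ω). -/
/-!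
Going backwards in time for a duration `u`, the trajectory is displaced from `x` by `-u • v` up
to an error `‖∇Φ‖_∞ u² / 2`, so `‖X (t - u) - x‖ ≥ (‖v‖ - ‖∇Φ‖_∞ u / 2) u`. At `u = 3 N diam Ω`
the smallness of the force makes this exceed `diam Ω`, so `X (t - u)` has left `Ω`.
-/

open Set

section Trajectory

variable {E : Type*} [NormedAddCommGroup E] [NormedSpace ℝ E]
  {X V A : ℝ → E} {M : ℝ}

theorem norm_sub_le_mul_abs_of_hasDerivAt (hV : ∀ s, HasDerivAt V (A s) s)
    (hA : ∀ s, ‖A s‖ ≤ M) (s t : ℝ) : ‖V s - V t‖ ≤ M * |s - t| :=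
  convex_univ.norm_image_sub_le_of_norm_hasDerivWithin_le
    (fun r _ => (hV r).hasDerivWithinAt) (fun r _ => hA r) (mem_univ t) (mem_univ s)

theorem norm_sub_add_smul_le_of_hasDerivAt (hX : ∀ s, HasDerivAt X (V s) s)
    (hV : ∀ s, HasDerivAt V (A s) s) (hA : ∀ s, ‖A s‖ ≤ M) (t : ℝ) {u : ℝ} (hu : 0 ≤ u) :
    ‖X (t - u) - X t + u • V t‖ ≤ M * u ^ 2 / 2 := by
  have hderiv (r : ℝ) :
      HasDerivAt (fun r => X (t - r) - X t + r • V t) (V t - V (t - r)) r := by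
    have hX' := (hX (t - r)).scomp r ((hasDerivAt_id r).const_sub t)
    have hsum : HasDerivAt (fun r => X (t - r) - X t + r • V t)
        ((-1 : ℝ) • V (t - r) + (1 : ℝ) • V t) r :=
      (hX'.sub_const (X t)).add ((hasDerivAt_id r).smul_const (V t))
    exact hsum.congr_deriv (by rw [neg_one_smul, one_smul]; abel)
  have hbound (r : ℝ) : HasDerivAt (fun r => M * r ^ 2 / 2) (M * r) r := by
    have h := ((hasDerivAt_pow 2 r).const_mul M).div_const 2
    exact h.congr_deriv (by push_cast; ring)
  refine image_norm_le_of_norm_deriv_right_le_deriv_boundary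
    (fun r _ => (hderiv r).continuousAt.continuousWithinAt)
    (fun r _ => (hderiv r).hasDerivWithinAt) (by simp) hbound (fun r hr => ?_) ⟨hu, le_rfl⟩
  simpa [abs_of_nonneg hr.1] using norm_sub_le_mul_abs_of_hasDerivAt hV hA t (t - r)

theorem mul_le_norm_sub_of_hasDerivAt (hX : ∀ s, HasDerivAt X (V s) s)
    (hV : ∀ s, HasDerivAt V (A s) s) (hA : ∀ s, ‖A s‖ ≤ M) (t : ℝ) {u : ℝ} (hu : 0 ≤ u) :
    (‖V t‖ - M * u / 2) * u ≤ ‖X (t - u) - X t‖ := by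
  have htaylor := norm_sub_add_smul_le_of_hasDerivAt hX hV hA t hu
  have htri : ‖u • V t‖ ≤ ‖X (t - u) - X t + u • V t‖ + ‖X (t - u) - X t‖ := by
    simpa using norm_sub_le (X (t - u) - X t + u • V t) (X (t - u) - X t)
  rw [norm_smul, Real.norm_of_nonneg hu] at htri
  linarith

end Trajectory

theorem backward_exit_time_bound_general
    (Ω : Set (EuclideanSpace ℝ (Fin 3)))
    (hΩb : Bornology.IsBounded Ω)
    (N δ M : ℝ) (hN : 1 ≤ N) (hδ1 : δ ≤ 1)
    (hM : M < δ / (3 * Metric.diam Ω * N ^ 2))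
    (t : ℝ) (x v : EuclideanSpace ℝ (Fin 3))
    (hx : x ∈ closure Ω) (hv : 1 / N ≤ ‖v‖)
    (X V A : ℝ → EuclideanSpace ℝ (Fin 3))
    (hX : ∀ s, HasDerivAt X (V s) s) (hV : ∀ s, HasDerivAt V (A s) s)
    (hA : ∀ s, ‖A s‖ ≤ M) (hXt : X t = x) (hVt : V t = v)
    (s : ℝ) (hsΩ : ∀ τ ∈ Set.Ioo (t - s) t, X τ ∈ Ω) :
    s ≤ 3 * N * Metric.diam Ω := by
  have hD0 : 0 < Metric.diam Ω := by
    refine Metric.diam_nonneg.lt_of_ne fun hD => ?_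
    -- with `diam Ω = 0` the bound on `M` reads `M < δ / 0 = 0`
    rw [← hD, mul_zero, zero_mul, div_zero] at hM
    exact hM.not_ge ((norm_nonneg _).trans (hA t))
  have hdiam {y : EuclideanSpace ℝ (Fin 3)} (hy : y ∈ Ω) : ‖y - x‖ ≤ Metric.diam Ω := by
    rw [← dist_eq_norm, ← Metric.diam_closure]
    exact Metric.dist_le_diam_of_mem hΩb.closure (subset_closure hy) hx
  set D := Metric.diam Ω
  by_contra! hs
  set u := 3 * N * D with hu
  have hu0 : 0 < u := by positivity
  have hdist := hdiam (hsΩ (t - u) ⟨by linarith, by linarith⟩)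
  have hlower := mul_le_norm_sub_of_hasDerivAt hX hV hA t hu0.le
  rw [hXt, hVt] at hlower
  have hvu : 3 * D ≤ ‖v‖ * u := by
    calc 3 * D = 1 / N * u := by rw [hu]; field_simp
      _ ≤ ‖v‖ * u := by gcongr
  have hMu : M * u ^ 2 < 3 * δ * D := by
    calc M * u ^ 2 < δ / (3 * D * N ^ 2) * u ^ 2 := by gcongr
      _ = 3 * δ * D := by field_simp; ring
  have hδD : δ * D ≤ D := mul_le_of_le_one_left hD0.le hδ1
  have hexpand : (‖v‖ - M * u / 2) * u = ‖v‖ * u - M * u ^ 2 / 2 := by ring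
  linarith

theorem backward_exit_time_bound
    (Ω : Set (EuclideanSpace ℝ (Fin 3))) (hΩo : IsOpen Ω)
    (hΩb : Bornology.IsBounded Ω)
    (N δ M : ℝ) (hN : 1 ≤ N) (hδ0 : 0 < δ) (hδ1 : δ ≤ 1)
    (hM0 : 0 ≤ M) (hM : M < δ / (3 * Metric.diam Ω * N ^ 2))
    (t : ℝ) (x v : EuclideanSpace ℝ (Fin 3))
    (hx : x ∈ closure Ω) (hv : 1 / N ≤ ‖v‖)
    (X V A : ℝ → EuclideanSpace ℝ (Fin 3))
    (hX : ∀ s, HasDerivAt X (V s) s) (hV : ∀ s, HasDerivAt V (A s) s)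
    (hA : ∀ s, ‖A s‖ ≤ M) (hXt : X t = x) (hVt : V t = v)
    (s : ℝ) (hs0 : 0 ≤ s) (hsΩ : ∀ τ ∈ Set.Ioo (t - s) t, X τ ∈ Ω) :
    s ≤ 3 * N * Metric.diam Ω :=
  backward_exit_time_bound_general Ω hΩb N δ M hN hδ1 hM t x v hx hv X V A hX hV hA hXt hVt s hsΩ
end

section
/- Let R be a 4×4 real matrix partitioned into 2×2 blocks, and suppose |det R| ≥ ρ > 0 while every entry of R is bounded in absolute value by C. Then there exist indices i, j ∈ {1,2,3,4} with i < j such that the 2×2 minor formed from rows 3,4 and columns i,j of R satisfies |det [[R_{3,i}, R_{3,j}],[R_{4,i}, R_{4,j}]]| ≥ ρ/(12 C²). -/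
/-!
Expanding `det R` along its bottom two rows (generalized Laplace expansion) writes it as a signed
sum of six products (top 2 × 2 minor) · (complementary bottom 2 × 2 minor). Each top minor is at
most `2 C²` in absolute value, so `|det R| ≤ 12 C² · M` where `M` is the largest bottom minor;
a bottom minor attaining `M` is the one we want.
-/

open Finset

namespace Matrix

def twoMinor {m n R : Type*} [CommRing R] (A : Matrix m n R) (r s : m) (i j : n) : R :=
  !![A r i, A r j; A s i, A s j].det

theorem det_fin_four_eq_twoMinor_expansion {R : Type*} [CommRing R]
    (A : Matrix (Fin 4) (Fin 4) R) :
    A.det =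
      A.twoMinor 0 1 0 1 * A.twoMinor 2 3 2 3 - A.twoMinor 0 1 0 2 * A.twoMinor 2 3 1 3
      + A.twoMinor 0 1 0 3 * A.twoMinor 2 3 1 2 + A.twoMinor 0 1 1 2 * A.twoMinor 2 3 0 3
      - A.twoMinor 0 1 1 3 * A.twoMinor 2 3 0 2 + A.twoMinor 0 1 2 3 * A.twoMinor 2 3 0 1 := by
  rw [det_succ_row_zero, Fin.sum_univ_four]
  simp only [Nat.succ_eq_add_one, Nat.reduceAdd, Fin.isValue, Fin.coe_ofNat_eq_mod, Nat.zero_mod,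
    pow_zero, one_mul, Fin.succAbove_zero, det_fin_three, submatrix_apply, Fin.succ_zero_eq_one,
    Fin.succ_one_eq_two, Fin.reduceSucc, Nat.one_mod, pow_one, neg_mul, Fin.succAbove,
    Fin.castSucc_zero, zero_lt_one, ↓reduceIte, Fin.castSucc_one, lt_self_iff_false,
    Fin.reduceCastSucc, Fin.lt_one_iff, Fin.reduceEq, Nat.reduceMod, even_two, Even.neg_pow,
    one_pow, Fin.reduceLT, Nat.mod_succ, twoMinor, det_fin_two_of]
  ring

theorem abs_twoMinor_le {m n : Type*} {A : Matrix m n ℝ} {C : ℝ} (hA : ∀ i j, |A i j| ≤ C)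
    (r s : m) (i j : n) : |A.twoMinor r s i j| ≤ 2 * C ^ 2 := by
  have hdet := det_le (abv := AbsoluteValue.abs) (A := !![A r i, A r j; A s i, A s j])
    (fun k l => by fin_cases k <;> fin_cases l <;> exact hA _ _)
  simpa [twoMinor] using hdet

theorem abs_det_fin_four_le_of_abs_twoMinor_le {A : Matrix (Fin 4) (Fin 4) ℝ} {C M : ℝ}
    (hA : ∀ i j, |A i j| ≤ C) (hM : ∀ i j : Fin 4, i < j → |A.twoMinor 2 3 i j| ≤ M) :
    |A.det| ≤ 12 * C ^ 2 * M := by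
  have term : ∀ i j k l : Fin 4, k < l →
      |A.twoMinor 0 1 i j * A.twoMinor 2 3 k l| ≤ 2 * C ^ 2 * M :=
    fun i j k l hkl => (abs_mul _ _).trans_le <|
      mul_le_mul (abs_twoMinor_le hA 0 1 i j) (hM k l hkl) (abs_nonneg _) (by positivity)
  obtain ⟨h1, h1'⟩ := abs_le.mp (term 0 1 2 3 (by decide))
  obtain ⟨h2, h2'⟩ := abs_le.mp (term 0 2 1 3 (by decide))
  obtain ⟨h3, h3'⟩ := abs_le.mp (term 0 3 1 2 (by decide))
  obtain ⟨h4, h4'⟩ := abs_le.mp (term 1 2 0 3 (by decide))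
  obtain ⟨h5, h5'⟩ := abs_le.mp (term 1 3 0 2 (by decide))
  obtain ⟨h6, h6'⟩ := abs_le.mp (term 2 3 0 1 (by decide))
  rw [det_fin_four_eq_twoMinor_expansion, abs_le]
  constructor <;> linarith

end Matrix

theorem bottom_rows_minor_lower_bound_general (R : Matrix (Fin 4) (Fin 4) ℝ)
    (ρ C : ℝ) (hC : 0 < C)
    (hdet : ρ ≤ |R.det|) (hent : ∀ i j, |R i j| ≤ C) :
    ∃ i j : Fin 4, i < j ∧
      ρ / (12 * C ^ 2) ≤ |Matrix.det !![R 2 i, R 2 j; R 3 i, R 3 j]| := by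
  obtain ⟨p, hp, hmax⟩ := exists_max_image ({p : Fin 4 × Fin 4 | p.1 < p.2} : Finset _)
    (fun p => |R.twoMinor 2 3 p.1 p.2|) ⟨(0, 1), by decide⟩
  have hdet_le : |R.det| ≤ 12 * C ^ 2 * |R.twoMinor 2 3 p.1 p.2| :=
    Matrix.abs_det_fin_four_le_of_abs_twoMinor_le hent fun i j hij =>
      hmax (i, j) (by simpa using hij)
  refine ⟨p.1, p.2, (mem_filter.mp hp).2, ?_⟩
  rw [div_le_iff₀ (by positivity)]
  change ρ ≤ |R.twoMinor 2 3 p.1 p.2| * (12 * C ^ 2)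
  linarith

theorem bottom_rows_minor_lower_bound (R : Matrix (Fin 4) (Fin 4) ℝ)
    (ρ C : ℝ) (hρ : 0 < ρ) (hC : 0 < C)
    (hdet : ρ ≤ |R.det|) (hent : ∀ i j, |R i j| ≤ C) :
    ∃ i j : Fin 4, i < j ∧
      ρ / (12 * C ^ 2) ≤ |Matrix.det !![R 2 i, R 2 j; R 3 i, R 3 j]| :=
  bottom_rows_minor_lower_bound_general R ρ C hC hdet hent
end
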